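/- If Z follows a p-variate standard normal distribution, W follows a standard exponential distribution independent of Z, and Y = μ + Dξ̃W + √W D Σ̃^{1/2} Z with D a positive diagonal matrix and Σ̃ positive definite, then the characteristic function of Y is φ_Y(t) = exp(i t'μ) · (1 + (1/2) t'DΣ̃Dt − i t'Dξ̃)^{−1}. -/

import Mathlib

/-!
Write `t ⬝ᵥ Y = t ⬝ᵥ μ + W b + √W (a ⬝ᵥ Z)` with `b = t ⬝ᵥ Dξ̃` and `a = t ᵥ* (D Σ̃^{1/2})`.
Conditionally on `W = w ≥ 0`, the Gaussian characteristic function turns the last two terms into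
`exp ((i b - |a|² / 2) w)`, and `|a|² = t ⬝ᵥ DΣ̃D t` because `Σ̃^{1/2}` is a symmetric square root.
Integrating against the exponential law gives `∫ exp (ζ w) e^{-w} dw = (1 - ζ)⁻¹` for `Re ζ < 1`.
-/

open MeasureTheory ProbabilityTheory Matrix

open scoped ComplexOrder in
/-- The positive semidefinite square root of a positive semidefinite matrix
(the definition of `Matrix.PosSemidef.sqrt` in the older Mathlib, removed since). -/
noncomputable def Matrix.PosSemidef.sqrt {n 𝕜 : Type*} [Fintype n] [DecidableEq n] [RCLike 𝕜]
    {A : Matrix n n 𝕜} (hA : A.PosSemidef) : Matrix n n 𝕜 :=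
  hA.1.eigenvectorUnitary.1 * diagonal ((↑) ∘ (√·) ∘ hA.1.eigenvalues) *
  (star hA.1.eigenvectorUnitary : Matrix n n 𝕜)

open Complex
open scoped ComplexOrder

namespace Matrix.PosSemidef

variable {n 𝕜 : Type*} [Fintype n] [DecidableEq n] [RCLike 𝕜] {A : Matrix n n 𝕜}

lemma isHermitian_sqrt (hA : A.PosSemidef) : hA.sqrt.IsHermitian := by
  have h : star ((↑) ∘ (√·) ∘ hA.1.eigenvalues : n → 𝕜) = (↑) ∘ (√·) ∘ hA.1.eigenvalues := by
    ext; simp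
  simp [IsHermitian, sqrt, conjTranspose_mul, Matrix.mul_assoc, star_eq_conjTranspose, h]

lemma sqrt_mul_self (hA : A.PosSemidef) : hA.sqrt * hA.sqrt = A := by
  set U := hA.1.eigenvectorUnitary
  calc hA.sqrt * hA.sqrt
      = U.1 * (diagonal ((↑) ∘ (√·) ∘ hA.1.eigenvalues) * ((star U : Matrix n n 𝕜) * U.1) *
        diagonal ((↑) ∘ (√·) ∘ hA.1.eigenvalues)) * (star U : Matrix n n 𝕜) := by
        simp only [sqrt, Matrix.mul_assoc]; rfl
    _ = A := by
      rw [Unitary.coe_star_mul_self, Matrix.mul_one, diagonal_mul_diagonal]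
      conv_rhs => rw [hA.1.spectral_theorem, Unitary.conjStarAlgAut_apply]
      simp [← RCLike.ofReal_mul, Real.mul_self_sqrt, hA.eigenvalues_nonneg]
      rfl

end Matrix.PosSemidef

lemma dotProduct_mul_transpose_mulVec {m n R : Type*} [Fintype m] [Fintype n] [CommSemiring R]
    (M : Matrix m n R) (t : m → R) :
    t ⬝ᵥ (M * Mᵀ) *ᵥ t = (t ᵥ* M) ⬝ᵥ (t ᵥ* M) := by
  rw [← mulVec_mulVec, dotProduct_mulVec, mulVec_transpose]

lemma integral_cexp_dotProduct_pi_gaussianReal {ι : Type*} [Fintype ι] (c : ι → ℝ) :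
    ∫ z, cexp (I * (c ⬝ᵥ z : ℝ)) ∂(Measure.pi fun _ : ι ↦ gaussianReal 0 1)
      = cexp (-(c ⬝ᵥ c : ℝ) / 2) := by
  have h := charFun_pi (μ := fun _ : ι ↦ gaussianReal 0 1) (WithLp.toLp 2 c)
  rw [charFun_apply, integral_map (by fun_prop) (by fun_prop)] at h
  simp only [charFun_gaussianReal, ← exp_sum] at h
  convert h using 2
  · simp [PiLp.inner_apply, dotProduct, mul_comm]
  · simp [dotProduct, Finset.sum_div, neg_div, sq]

lemma expMeasure_Iio_zero (r : ℝ) : expMeasure r (Set.Iio 0) = 0 := by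
  rw [expMeasure, gammaMeasure, withDensity_apply _ measurableSet_Iio]
  exact lintegral_exponentialPDF_of_nonpos le_rfl

lemma ae_nonneg_expMeasure (r : ℝ) : ∀ᵐ w ∂expMeasure r, 0 ≤ w :=
  ae_iff.2 (measure_mono_null (fun _ hw ↦ not_le.mp hw) (expMeasure_Iio_zero r))

lemma integral_cexp_mul_expMeasure {r : ℝ} (hr : 0 < r) {ζ : ℂ} (hζ : ζ.re < r) :
    ∫ w, cexp (ζ * w) ∂expMeasure r = r / (r - ζ) := by
  have hdens : ∀ w : ℝ, (gammaPDF 1 r w).toReal • cexp (ζ * w)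
      = Set.indicator (Set.Ici 0) (fun w : ℝ ↦ r * cexp ((ζ - r) * w)) w := by
    intro w
    rcases le_or_gt 0 w with hw | hw
    · rw [Set.indicator_of_mem (Set.mem_Ici.2 hw), gammaPDF,
        ENNReal.toReal_ofReal (gammaPDFReal_nonneg one_pos hr w)]
      simp [gammaPDFReal, hw, sub_mul, exp_sub, exp_neg]
      ring
    · rw [Set.indicator_of_notMem (by simpa using hw), gammaPDF, gammaPDFReal,
        if_neg (not_le.2 hw)]
      simp
  rw [expMeasure, gammaMeasure, integral_withDensity_eq_integral_toReal_smul (f := gammaPDF 1 r)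
    (measurable_gammaPDFReal 1 r).ennreal_ofReal (ae_of_all _ fun _ ↦ ENNReal.ofReal_lt_top)]
  simp only [hdens]
  rw [integral_indicator measurableSet_Ici, integral_Ici_eq_integral_Ioi, integral_const_mul,
    integral_exp_mul_complex_Ioi (by simpa using hζ)]
  simp only [ofReal_zero, mul_zero, exp_zero]
  rw [neg_div, ← div_neg, neg_sub, mul_one_div]

lemma integral_cexp_normalMixture {ι : Type*} [Fintype ι] {ν : Measure ℝ} [IsProbabilityMeasure ν]
    (hν : ∀ᵐ w ∂ν, 0 ≤ w) (a : ι → ℝ) (b : ℝ) :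
    ∫ q, cexp (I * (q.1 * b + √q.1 * (a ⬝ᵥ q.2) : ℝ))
        ∂(ν.prod (Measure.pi fun _ : ι ↦ gaussianReal 0 1))
      = ∫ w, cexp ((I * b - (a ⬝ᵥ a : ℝ) / 2) * w) ∂ν := by
  have hint : Integrable (fun q : ℝ × (ι → ℝ) ↦ cexp (I * (q.1 * b + √q.1 * (a ⬝ᵥ q.2) : ℝ)))
      (ν.prod (Measure.pi fun _ : ι ↦ gaussianReal 0 1)) :=
    (integrable_const (1 : ℝ)).mono' (by fun_prop)
      (ae_of_all _ fun q ↦ (norm_exp_I_mul_ofReal _).le)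
  rw [integral_prod _ hint]
  refine integral_congr_ae (hν.mono fun w hw ↦ ?_)
  have hscale : ∀ z : ι → ℝ, √w * (a ⬝ᵥ z) = (√w • a) ⬝ᵥ z := fun z ↦ by
    rw [smul_dotProduct, smul_eq_mul]
  simp only [ofReal_add, mul_add, exp_add, hscale]
  rw [integral_const_mul, integral_cexp_dotProduct_pi_gaussianReal, ← exp_add]
  congr 1
  simp only [smul_dotProduct, dotProduct_smul, smul_eq_mul, ← mul_assoc, Real.mul_self_sqrt hw]
  push_cast
  ring

lemma map_prod_eq_prod_pi_of_indepFun {Ω ι β : Type*} [MeasurableSpace Ω] [Fintype ι]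
    [MeasurableSpace β] {α : ι → Type*} [∀ i, MeasurableSpace (α i)]
    (P : Measure Ω) [IsProbabilityMeasure P] {W : Ω → β} {Z : Ω → (i : ι) → α i}
    (hW : Measurable W) (hZ : Measurable Z) (hWZ : IndepFun W Z P)
    (hZi : iIndepFun (fun i ω ↦ Z ω i) P) :
    P.map (fun ω ↦ (W ω, Z ω)) = (P.map W).prod (Measure.pi fun i ↦ P.map fun ω ↦ Z ω i) := by
  rw [(indepFun_iff_map_prod_eq_prod_map_map hW.aemeasurable hZ.aemeasurable).1 hWZ,
    (iIndepFun_iff_map_fun_eq_pi_map fun i ↦ (hZ.eval (a := i)).aemeasurable).1 hZi]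

theorem mal_charFun_general {Ω : Type*} [MeasurableSpace Ω] (P : Measure Ω) [IsProbabilityMeasure P]
    {p : ℕ} (μ ξ d : Fin p → ℝ)
    (S : Matrix (Fin p) (Fin p) ℝ) (hS : S.PosDef)
    (D : Matrix (Fin p) (Fin p) ℝ) (hD : D = Matrix.diagonal d)
    (W : Ω → ℝ) (Z : Ω → Fin p → ℝ) (hWm : Measurable W) (hZm : Measurable Z)
    (hW : Measure.map W P = expMeasure 1)
    (hZindep : iIndepFun (fun i ω => Z ω i) P)
    (hZgauss : ∀ i, Measure.map (fun ω => Z ω i) P = gaussianReal 0 1)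
    (hWZ : IndepFun W Z P)
    (Y : Ω → Fin p → ℝ)
    (hY : ∀ ω, Y ω =
      μ + W ω • D.mulVec ξ + Real.sqrt (W ω) • (D * hS.posSemidef.sqrt).mulVec (Z ω)) :
    ∀ t : Fin p → ℝ,
      ∫ ω, Complex.exp (Complex.I * ((t ⬝ᵥ Y ω : ℝ) : ℂ)) ∂P
        = Complex.exp (Complex.I * ((t ⬝ᵥ μ : ℝ) : ℂ)) *
          (1 + (1 / 2 : ℂ) * ((t ⬝ᵥ (D * S * D).mulVec t : ℝ) : ℂ)
            - Complex.I * ((t ⬝ᵥ D.mulVec ξ : ℝ) : ℂ))⁻¹ := by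
  intro t
  set a := t ᵥ* (D * hS.posSemidef.sqrt)
  set b := t ⬝ᵥ D *ᵥ ξ
  have hdot : ∀ ω, t ⬝ᵥ Y ω = t ⬝ᵥ μ + (W ω * b + √(W ω) * (a ⬝ᵥ Z ω)) := fun ω ↦ by
    simp only [hY, dotProduct_add, dotProduct_smul, smul_eq_mul, dotProduct_mulVec, a, b]
    ring
  have hquad : t ⬝ᵥ (D * S * D) *ᵥ t = a ⬝ᵥ a := by
    have hDt : Dᵀ = D := by rw [hD, diagonal_transpose]
    have hsqrt : (hS.posSemidef.sqrt)ᵀ = hS.posSemidef.sqrt := hS.posSemidef.isHermitian_sqrt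
    rw [← dotProduct_mul_transpose_mulVec, transpose_mul, hsqrt, hDt, ← Matrix.mul_assoc,
      Matrix.mul_assoc D hS.posSemidef.sqrt, hS.posSemidef.sqrt_mul_self]
  have hlaw : P.map (fun ω ↦ (W ω, Z ω))
      = (expMeasure 1).prod (Measure.pi fun _ : Fin p ↦ gaussianReal 0 1) := by
    rw [map_prod_eq_prod_pi_of_indepFun P hWm hZm hWZ hZindep, hW, funext hZgauss]
  have ha : 0 ≤ a ⬝ᵥ a := Finset.sum_nonneg fun i _ ↦ mul_self_nonneg (a i)
  have := isProbabilityMeasure_expMeasure one_pos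
  calc ∫ ω, cexp (I * (t ⬝ᵥ Y ω : ℝ)) ∂P
      = cexp (I * (t ⬝ᵥ μ : ℝ)) * ∫ ω, cexp (I * (W ω * b + √(W ω) * (a ⬝ᵥ Z ω) : ℝ)) ∂P := by
        simp only [hdot, ofReal_add, mul_add, exp_add, integral_const_mul]
    _ = cexp (I * (t ⬝ᵥ μ : ℝ)) * ∫ w, cexp ((I * b - (a ⬝ᵥ a : ℝ) / 2) * w) ∂expMeasure 1 := by
        rw [← integral_cexp_normalMixture (ae_nonneg_expMeasure 1), ← hlaw,
          integral_map (by fun_prop) (by fun_prop)]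
    _ = _ := by
        rw [integral_cexp_mul_expMeasure one_pos (by simp; linarith), hquad]
        push_cast
        ring

/-- characteristic function of the MAL mixture
`Y = μ + Dξ̃ W + √W D Σ̃^{1/2} Z`. -/
theorem mal_charFun {Ω : Type*} [MeasurableSpace Ω] (P : Measure Ω) [IsProbabilityMeasure P]
    {p : ℕ} (μ ξ d : Fin p → ℝ) (hd : ∀ i, 0 < d i)
    (S : Matrix (Fin p) (Fin p) ℝ) (hS : S.PosDef)
    (D : Matrix (Fin p) (Fin p) ℝ) (hD : D = Matrix.diagonal d)
    (W : Ω → ℝ) (Z : Ω → Fin p → ℝ) (hWm : Measurable W) (hZm : Measurable Z)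
    (hW : Measure.map W P = expMeasure 1)
    (hZindep : iIndepFun (fun i ω => Z ω i) P)
    (hZgauss : ∀ i, Measure.map (fun ω => Z ω i) P = gaussianReal 0 1)
    (hWZ : IndepFun W Z P)
    (Y : Ω → Fin p → ℝ)
    (hY : ∀ ω, Y ω =
      μ + W ω • D.mulVec ξ + Real.sqrt (W ω) • (D * hS.posSemidef.sqrt).mulVec (Z ω)) :
    ∀ t : Fin p → ℝ,
      ∫ ω, Complex.exp (Complex.I * ((t ⬝ᵥ Y ω : ℝ) : ℂ)) ∂P
        = Complex.exp (Complex.I * ((t ⬝ᵥ μ : ℝ) : ℂ)) *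
          (1 + (1 / 2 : ℂ) * ((t ⬝ᵥ (D * S * D).mulVec t : ℝ) : ℂ)
            - Complex.I * ((t ⬝ᵥ D.mulVec ξ : ℝ) : ℂ))⁻¹ :=
  mal_charFun_general P μ ξ d S hS D hD W Z hWm hZm hW hZindep hZgauss hWZ Y hY
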